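/- arXiv:1901.02803 — 3 statements merged into one kernel-verified Lean document; each statement's English description precedes it below -/
import Mathlib

section
/- Let G be a finite group, ℓ a prime, and Z a central subgroup of G whose order is not divisible by ℓ; write Ḡ = G/Z and let π : G → Ḡ be the canonical projection. Then the map Θ sending R to π(R) is a bijection from the set of ℓ-radical subgroups of G onto the set of ℓ-radical subgroups of Ḡ, with inverse sending an ℓ-radical subgroup Q̄ of Ḡ to O_ℓ(π⁻¹(Q̄)). Moreover, two ℓ-radical subgroups R₁, R₂ of G are conjugate in G if and only if Θ(R₁) and Θ(R₂) are conjugate in Ḡ. -/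
/-- The `ℓ`-core `O_ℓ(G)` of a finite group `G`: the largest normal `ℓ`-subgroup of `G`,
realized as the join of all normal `ℓ`-subgroups. -/
def pCore (ℓ : ℕ) (G : Type) [Group G] : Subgroup G :=
  sSup {N : Subgroup G | N.Normal ∧ IsPGroup ℓ ↥N}

/-- The `ℓ`-core of a subgroup `H` of `G`, viewed again as a subgroup of `G`. -/
def pCoreOf (ℓ : ℕ) {G : Type} [Group G] (H : Subgroup G) : Subgroup G :=
  Subgroup.map H.subtype (pCore ℓ ↥H)

/-- A subgroup `R` of `G` is `ℓ`-radical if `R = O_ℓ(N_G(R))`. -/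
def IsRadicalSubgroup (ℓ : ℕ) {G : Type} [Group G] (R : Subgroup G) : Prop :=
  R = pCoreOf ℓ (Subgroup.normalizer (R : Set G))

/-- Two subgroups of `G` are conjugate in `G`. -/
def SubgroupIsConj {G : Type} [Group G] (R₁ R₂ : Subgroup G) : Prop :=
  ∃ g : G, Subgroup.map (MulAut.conj g).toMonoidHom R₁ = R₂

/-!
A central ℓ'-subgroup `Z` meets every ℓ-subgroup `R` trivially and normalizes it, so `R` is the
ℓ-core of `RZ`. Hence ℓ-subgroups of `G` are determined by their images in `G/Z`, and
`N_G(RZ) = N_G(R)`, whence `π(N_G(R)) = N_{G/Z}(π R)`. Conversely the image of a Sylow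
ℓ-subgroup of a preimage lifts any ℓ-subgroup of `G/Z`, which gives `π(O_ℓ(H)) = O_ℓ(π H)`
whenever `Z ≤ H`. These two facts show that `π` and `Q ↦ O_ℓ(π⁻¹ Q)` preserve radicality and
are mutually inverse on radical subgroups; conjugacy transfers because ℓ-subgroups are
determined by their images.
-/

open Subgroup

section Core

variable {ℓ : ℕ} {G : Type} [Group G]

instance pCore_normal : (pCore ℓ G).Normal :=
  sSup_normal _ fun _ hN => hN.1

theorem isPGroup_pCore [Finite G] : IsPGroup ℓ (pCore ℓ G) := by
  suffices ∀ s : Set (Subgroup G), s.Finite →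
      (∀ N ∈ s, N.Normal ∧ IsPGroup ℓ N) → IsPGroup ℓ ↥(sSup s) from
    this _ (Set.toFinite _) fun _ hN => hN
  intro s hs
  induction s, hs using Set.Finite.induction_on with
  | empty => exact fun _ => by rw [sSup_empty]; exact IsPGroup.of_bot
  | @insert N s _ _ ih =>
    intro h
    rw [sSup_insert]
    have hN := (h N (Set.mem_insert N s)).1
    exact (h N (Set.mem_insert N s)).2.to_sup_of_normal_left
      (ih fun M hM => h M (Set.mem_insert_of_mem N hM))

theorem pCoreOf_le (H : Subgroup G) : pCoreOf ℓ H ≤ H :=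
  map_subtype_le _

theorem isPGroup_pCoreOf [Finite G] (H : Subgroup G) :
    IsPGroup ℓ (pCoreOf ℓ H) :=
  isPGroup_pCore.map _

theorem le_normalizer_pCoreOf (H : Subgroup G) : H ≤ normalizer (pCoreOf ℓ H : Set G) := by
  calc H = (normalizer (pCore ℓ H : Set H)).map H.subtype := by
        rw [normalizer_eq_top_iff.2 inferInstance, ← MonoidHom.range_eq_map, range_subtype]
    _ ≤ normalizer (pCoreOf ℓ H : Set G) := le_normalizer_map _

theorem le_pCoreOf {H N : Subgroup G} (hNH : N ≤ H) (hHN : H ≤ normalizer (N : Set G))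
    (hN : IsPGroup ℓ N) : N ≤ pCoreOf ℓ H := by
  have hnormal : (N.subgroupOf H).Normal := (normal_subgroupOf_iff_le_normalizer hNH).2 hHN
  have hle : N.subgroupOf H ≤ pCore ℓ H :=
    le_sSup ⟨hnormal, hN.comap_of_injective H.subtype H.subtype_injective⟩
  simpa [pCoreOf, subgroupOf_map_subtype, inf_eq_left.2 hNH] using map_mono (f := H.subtype) hle

theorem pCoreOf_eq_self {H : Subgroup G} (hH : IsPGroup ℓ H) : pCoreOf ℓ H = H :=
  le_antisymm (pCoreOf_le H) (le_pCoreOf le_rfl le_normalizer hH)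

theorem map_pCoreOf_le [Finite G] {G' : Type} [Group G'] (f : G →* G')
    (H : Subgroup G) : (pCoreOf ℓ H).map f ≤ pCoreOf ℓ (H.map f) :=
  le_pCoreOf (map_mono (pCoreOf_le H))
    ((map_mono (le_normalizer_pCoreOf H)).trans (le_normalizer_map f))
    ((isPGroup_pCoreOf H).map f)

theorem map_equiv_pCoreOf [Finite G] {G' : Type} [Group G'] (e : G ≃* G')
    (H : Subgroup G) : (pCoreOf ℓ H).map e.toMonoidHom = pCoreOf ℓ (H.map e.toMonoidHom) := by
  have : Finite G' := Finite.of_equiv G e.toEquiv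
  refine le_antisymm (map_pCoreOf_le e.toMonoidHom H) ?_
  rw [map_equiv_eq_comap_symm' e (pCoreOf ℓ H), ← map_le_iff_le_comap]
  convert map_pCoreOf_le e.symm.toMonoidHom (H.map e.toMonoidHom)
  rw [map_map]
  simp

theorem normalizer_le_normalizer_pCoreOf [Finite G] (H : Subgroup G) :
    normalizer (H : Set G) ≤ normalizer (pCoreOf ℓ H : Set G) := by
  intro x hx
  rw [mem_normalizer_iff_map_conj_eq] at hx ⊢
  exact (map_equiv_pCoreOf (MulAut.conj x) H).trans (congrArg (pCoreOf ℓ) hx)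

theorem IsRadicalSubgroup.isPGroup [Finite G] {R : Subgroup G}
    (hR : IsRadicalSubgroup ℓ R) : IsPGroup ℓ R := by
  rw [hR]
  exact isPGroup_pCoreOf _

end Core

theorem exists_isPGroup_le_map_eq {p : ℕ} [Fact p.Prime] {G G' : Type} [Group G] [Group G']
    [Finite G] (f : G →* G') {K : Subgroup G} (hK : IsPGroup p (K.map f)) :
    ∃ L ≤ K, IsPGroup p L ∧ L.map f = K.map f := by
  obtain ⟨P⟩ : Nonempty (Sylow p K) := inferInstance
  have hP : (P.mapSurjective (f.subgroupMap_surjective K) : Subgroup (K.map f)) = ⊤ :=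
    ((P.mapSurjective _).is_maximal' (hK.to_subgroup ⊤) le_top).symm
  refine ⟨P.map K.subtype, map_subtype_le _, P.isPGroup'.map _, ?_⟩
  rw [Sylow.coe_mapSurjective] at hP
  calc (P.map K.subtype).map f
        = ((P : Subgroup K).map (f.subgroupMap K)).map (K.map f).subtype := by
          rw [map_map, map_map]; rfl
    _ = K.map f := by rw [hP, ← MonoidHom.range_eq_map, range_subtype]

section Central

variable {ℓ : ℕ} {G : Type} [Group G] {Z : Subgroup G}

theorem disjoint_of_isPGroup [Finite G] (hℓ : ℓ.Prime) (hZℓ : ¬ ℓ ∣ Nat.card Z)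
    {R : Subgroup G} (hR : IsPGroup ℓ R) : Disjoint R Z := by
  have : Fact ℓ.Prime := ⟨hℓ⟩
  obtain ⟨k, hk⟩ := hR.exists_card_eq
  exact disjoint_of_coprime_natCard (hk ▸ (hℓ.coprime_iff_not_dvd.2 hZℓ).pow_left k)

theorem le_normalizer_of_le_center (hZc : Z ≤ center G) (R : Subgroup G) :
    Z ≤ normalizer (R : Set G) :=
  hZc.trans (center_le_normalizer _)

variable [Z.Normal]

local notation "π" => QuotientGroup.mk' Z

theorem sup_eq_comap_map_mk' (R : Subgroup G) : R ⊔ Z = (R.map π).comap π := by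
  rw [comap_map_eq, QuotientGroup.ker_mk']

theorem map_mk'_map_conj (g : G) (R : Subgroup G) :
    (R.map (MulAut.conj g).toMonoidHom).map π = (R.map π).map (MulAut.conj (π g)).toMonoidHom := by
  rw [map_map, map_map]
  rfl

variable [Finite G]

theorem pCoreOf_sup_eq (hℓ : ℓ.Prime) (hZc : Z ≤ center G) (hZℓ : ¬ ℓ ∣ Nat.card Z)
    {R : Subgroup G} (hR : IsPGroup ℓ R) : pCoreOf ℓ (R ⊔ Z) = R := by
  have hRP : R ≤ pCoreOf ℓ (R ⊔ Z) :=
    le_pCoreOf le_sup_left (sup_le le_normalizer (le_normalizer_of_le_center hZc R)) hR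
  refine le_antisymm (fun p hp => ?_) hRP
  obtain ⟨r, hr, z, hz, rfl⟩ := mem_sup_of_normal_right.1 (pCoreOf_le _ hp)
  have hzP : z ∈ pCoreOf ℓ (R ⊔ Z) := by simpa using mul_mem (inv_mem (hRP hr)) hp
  have hz1 : z = 1 := disjoint_def.1 (disjoint_of_isPGroup hℓ hZℓ (isPGroup_pCoreOf _)) hzP hz
  simpa [hz1] using hr

theorem normalizer_sup_eq (hℓ : ℓ.Prime) (hZc : Z ≤ center G) (hZℓ : ¬ ℓ ∣ Nat.card Z)
    {R : Subgroup G} (hR : IsPGroup ℓ R) :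
    normalizer ((R ⊔ Z : Subgroup G) : Set G) = normalizer (R : Set G) := by
  refine le_antisymm (fun x hx => ?_) (fun x hx => ?_)
  · simpa [pCoreOf_sup_eq hℓ hZc hZℓ hR] using normalizer_le_normalizer_pCoreOf (ℓ := ℓ) (R ⊔ Z) hx
  · have hxZ : x ∈ normalizer (Z : Set G) := by simp [normalizer_eq_top_iff.2 ‹Z.Normal›]
    rw [mem_normalizer_iff_map_conj_eq] at hx hxZ ⊢
    rw [Subgroup.map_sup, hx, hxZ]

theorem eq_of_map_mk'_eq (hℓ : ℓ.Prime) (hZc : Z ≤ center G) (hZℓ : ¬ ℓ ∣ Nat.card Z)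
    {R S : Subgroup G} (hR : IsPGroup ℓ R) (hS : IsPGroup ℓ S) (h : R.map π = S.map π) :
    R = S := by
  rw [← pCoreOf_sup_eq hℓ hZc hZℓ hR, ← pCoreOf_sup_eq hℓ hZc hZℓ hS, sup_eq_comap_map_mk',
    sup_eq_comap_map_mk', h]

theorem comap_mk'_normalizer_map (hℓ : ℓ.Prime) (hZc : Z ≤ center G) (hZℓ : ¬ ℓ ∣ Nat.card Z)
    {R : Subgroup G} (hR : IsPGroup ℓ R) :
    (normalizer (R.map π : Set (G ⧸ Z))).comap π = normalizer (R : Set G) := by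
  rw [comap_normalizer_eq_of_surjective _ (QuotientGroup.mk'_surjective Z),
    ← sup_eq_comap_map_mk', normalizer_sup_eq hℓ hZc hZℓ hR]

theorem map_mk'_pCoreOf (hℓ : ℓ.Prime) (hZc : Z ≤ center G) (hZℓ : ¬ ℓ ∣ Nat.card Z)
    {H : Subgroup G} (hZH : Z ≤ H) : (pCoreOf ℓ H).map π = pCoreOf ℓ (H.map π) := by
  have : Fact ℓ.Prime := ⟨hℓ⟩
  refine le_antisymm (map_pCoreOf_le π H) ?_
  set Q := (pCoreOf ℓ (H.map π)).comap π
  have hQ : Q.map π = pCoreOf ℓ (H.map π) :=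
    map_comap_eq_self_of_surjective (QuotientGroup.mk'_surjective Z) _
  -- An ℓ-subgroup `L` lifting `O_ℓ(π H)` is `O_ℓ` of its full preimage, hence normalized by `H`.
  obtain ⟨L, hLQ, hL, hLQ'⟩ := exists_isPGroup_le_map_eq π (hQ ▸ isPGroup_pCoreOf _)
  have hQH : Q ≤ H := by
    simpa [← sup_eq_comap_map_mk', hZH] using comap_mono (f := π) (pCoreOf_le (H.map π))
  have hLZ : pCoreOf ℓ Q = L := by
    rw [← pCoreOf_sup_eq hℓ hZc hZℓ hL, sup_eq_comap_map_mk', hLQ', ← sup_eq_comap_map_mk',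
      sup_eq_left.2 (QuotientGroup.le_comap_mk' Z _)]
  have hHQ : H ≤ normalizer (Q : Set G) := by
    rw [← comap_normalizer_eq_of_surjective _ (QuotientGroup.mk'_surjective Z)]
    exact le_comap_map π H |>.trans (comap_mono (le_normalizer_pCoreOf _))
  have hHL : H ≤ normalizer (L : Set G) :=
    hLZ ▸ hHQ.trans (normalizer_le_normalizer_pCoreOf Q)
  calc pCoreOf ℓ (H.map π) = L.map π := by rw [hLQ', hQ]
    _ ≤ (pCoreOf ℓ H).map π := map_mono (le_pCoreOf (hLQ.trans hQH) hHL hL)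

theorem pCoreOf_comap_map_mk' (hℓ : ℓ.Prime) (hZc : Z ≤ center G) (hZℓ : ¬ ℓ ∣ Nat.card Z)
    {R : Subgroup G} (hR : IsPGroup ℓ R) : pCoreOf ℓ ((R.map π).comap π) = R := by
  rw [← sup_eq_comap_map_mk', pCoreOf_sup_eq hℓ hZc hZℓ hR]

theorem map_mk'_pCoreOf_comap (hℓ : ℓ.Prime) (hZc : Z ≤ center G) (hZℓ : ¬ ℓ ∣ Nat.card Z)
    {Q : Subgroup (G ⧸ Z)} (hQ : IsPGroup ℓ Q) : (pCoreOf ℓ (Q.comap π)).map π = Q := by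
  rw [map_mk'_pCoreOf hℓ hZc hZℓ (QuotientGroup.le_comap_mk' Z Q),
    map_comap_eq_self_of_surjective (QuotientGroup.mk'_surjective Z), pCoreOf_eq_self hQ]

theorem IsRadicalSubgroup.map_mk' (hℓ : ℓ.Prime) (hZc : Z ≤ center G) (hZℓ : ¬ ℓ ∣ Nat.card Z)
    {R : Subgroup G} (hR : IsRadicalSubgroup ℓ R) : IsRadicalSubgroup ℓ (R.map π) := by
  have hN : normalizer (R.map π : Set (G ⧸ Z)) = (normalizer (R : Set G)).map π := by
    rw [← comap_mk'_normalizer_map hℓ hZc hZℓ hR.isPGroup,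
      map_comap_eq_self_of_surjective (QuotientGroup.mk'_surjective Z)]
  rw [IsRadicalSubgroup, hN, ← map_mk'_pCoreOf hℓ hZc hZℓ (le_normalizer_of_le_center hZc R),
    ← hR]

theorem IsRadicalSubgroup.pCoreOf_comap_mk' (hℓ : ℓ.Prime) (hZc : Z ≤ center G)
    (hZℓ : ¬ ℓ ∣ Nat.card Z) {Q : Subgroup (G ⧸ Z)} (hQ : IsRadicalSubgroup ℓ Q) :
    IsRadicalSubgroup ℓ (pCoreOf ℓ (Q.comap π)) := by
  set R := pCoreOf ℓ (Q.comap π)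
  have hRQ : R.map π = Q := map_mk'_pCoreOf_comap hℓ hZc hZℓ hQ.isPGroup
  have hR : IsPGroup ℓ R := isPGroup_pCoreOf _
  refine eq_of_map_mk'_eq hℓ hZc hZℓ hR (isPGroup_pCoreOf _) ?_
  rw [map_mk'_pCoreOf hℓ hZc hZℓ (le_normalizer_of_le_center hZc R),
    ← comap_mk'_normalizer_map hℓ hZc hZℓ hR,
    map_comap_eq_self_of_surjective (QuotientGroup.mk'_surjective Z), hRQ]
  exact hQ

theorem subgroupIsConj_map_mk'_iff (hℓ : ℓ.Prime) (hZc : Z ≤ center G)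
    (hZℓ : ¬ ℓ ∣ Nat.card Z) {R₁ R₂ : Subgroup G} (hR₁ : IsPGroup ℓ R₁) (hR₂ : IsPGroup ℓ R₂) :
    SubgroupIsConj (R₁.map π) (R₂.map π) ↔ SubgroupIsConj R₁ R₂ := by
  constructor
  · rintro ⟨gbar, hg⟩
    obtain ⟨g, rfl⟩ := QuotientGroup.mk'_surjective Z gbar
    exact ⟨g, eq_of_map_mk'_eq hℓ hZc hZℓ (hR₁.map _) hR₂ (by rw [map_mk'_map_conj, hg])⟩
  · rintro ⟨g, rfl⟩
    exact ⟨π g, (map_mk'_map_conj g R₁).symm⟩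

end Central

theorem statement0 (G : Type) [Group G] [Finite G] (ℓ : ℕ) (hℓ : ℓ.Prime)
    (Z : Subgroup G) [Z.Normal] (hZc : Z ≤ Subgroup.center G)
    (hZℓ : ¬ ℓ ∣ Nat.card Z) :
    Set.BijOn (fun R : Subgroup G => Subgroup.map (QuotientGroup.mk' Z) R)
      {R : Subgroup G | IsRadicalSubgroup ℓ R}
      {Q : Subgroup (G ⧸ Z) | IsRadicalSubgroup ℓ Q} ∧
    Set.InvOn (fun Q : Subgroup (G ⧸ Z) => pCoreOf ℓ (Subgroup.comap (QuotientGroup.mk' Z) Q))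
      (fun R : Subgroup G => Subgroup.map (QuotientGroup.mk' Z) R)
      {R : Subgroup G | IsRadicalSubgroup ℓ R}
      {Q : Subgroup (G ⧸ Z) | IsRadicalSubgroup ℓ Q} ∧
    ∀ R₁ R₂ : Subgroup G, IsRadicalSubgroup ℓ R₁ → IsRadicalSubgroup ℓ R₂ →
      (SubgroupIsConj R₁ R₂ ↔
        SubgroupIsConj (Subgroup.map (QuotientGroup.mk' Z) R₁)
          (Subgroup.map (QuotientGroup.mk' Z) R₂)) := by
  have hInv : Set.InvOn (fun Q : Subgroup (G ⧸ Z) => pCoreOf ℓ (Q.comap (QuotientGroup.mk' Z)))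
      (fun R : Subgroup G => R.map (QuotientGroup.mk' Z))
      {R | IsRadicalSubgroup ℓ R} {Q | IsRadicalSubgroup ℓ Q} :=
    ⟨fun _ hR => pCoreOf_comap_map_mk' hℓ hZc hZℓ hR.isPGroup,
      fun _ hQ => map_mk'_pCoreOf_comap hℓ hZc hZℓ hQ.isPGroup⟩
  refine ⟨hInv.bijOn (fun _ hR => hR.map_mk' hℓ hZc hZℓ)
    (fun _ hQ => hQ.pCoreOf_comap_mk' hℓ hZc hZℓ), hInv, fun R₁ R₂ hR₁ hR₂ => ?_⟩
  exact (subgroupIsConj_map_mk'_iff hℓ hZc hZℓ hR₁.isPGroup hR₂.isPGroup).symm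
end

section
/- Let G be a finite group, H a normal subgroup of G of index 2, and ℓ an odd prime. Then a subgroup R of G is an ℓ-radical subgroup of G if and only if R is contained in H and R is an ℓ-radical subgroup of H; in particular the set of ℓ-radical subgroups of G coincides with the set of ℓ-radical subgroups of H. -/
/-!
Every `ℓ`-element `x` of `G` lies in `H`: `x ^ 2 ∈ H` and `x` is a power of `x ^ 2` since its
order is odd. So an `ℓ`-radical subgroup `R` of `G` lies in `H`, and for `R ≤ H` we have
`N_H(R) = H ⊓ N_G(R)`, a normal subgroup of `N_G(R)` containing `O_ℓ(N_G(R))`. Then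
`O_ℓ(N_G(R)) ≤ O_ℓ(N_H(R))`, while `O_ℓ(N_H(R))` is characteristic in `N_H(R)`, hence a normal
`ℓ`-subgroup of `N_G(R)`; thus the two `ℓ`-cores agree.
-/

namespace Subgroup

variable {ℓ : ℕ} {G : Type} [Group G]

theorem le_pCore {N : Subgroup G} [N.Normal] (hN : IsPGroup ℓ N) : N ≤ pCore ℓ G :=
  le_sSup ⟨‹_›, hN⟩

theorem map_pCore_le {G' : Type} [Group G'] (e : G ≃* G') :
    (pCore ℓ G).map e ≤ pCore ℓ G' := by
  rw [map_le_iff_le_comap]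
  refine sSup_le fun N ⟨hN, hNℓ⟩ ↦ map_le_iff_le_comap.mp ?_
  have := hN.map (e : G →* G') e.surjective
  exact le_pCore (hNℓ.map _)

theorem map_pCore {G' : Type} [Group G'] (e : G ≃* G') :
    (pCore ℓ G).map e = pCore ℓ G' := by
  refine le_antisymm (map_pCore_le e) ?_
  rw [map_equiv_eq_comap_symm, ← map_le_iff_le_comap]
  exact map_pCore_le e.symm

theorem isPGroup_pCore [Finite G] (hℓ : ℓ.Prime) : IsPGroup ℓ (pCore ℓ G) :=
  have : Fact ℓ.Prime := ⟨hℓ⟩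
  Sylow.sSup_of_normal _ (fun _ hN ↦ hN.2) (fun _ hN ↦ hN.1)

theorem pCoreOf_le (K : Subgroup G) : pCoreOf ℓ K ≤ K :=
  map_subtype_le _

theorem isPGroup_pCoreOf [Finite G] (hℓ : ℓ.Prime) (K : Subgroup G) :
    IsPGroup ℓ (pCoreOf ℓ K) :=
  (isPGroup_pCore hℓ).map _

theorem le_pCoreOf {P K : Subgroup G} (hPK : P ≤ K) (hK : K ≤ normalizer (P : Set G))
    (hP : IsPGroup ℓ P) : P ≤ pCoreOf ℓ K := by
  have : (P.subgroupOf K).Normal := (normal_subgroupOf_iff_le_normalizer hPK).mpr hK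
  rw [← map_subgroupOf_eq_of_le hPK]
  exact map_mono (le_pCore (hP.of_equiv (subgroupOfEquivOfLe hPK).symm))

theorem map_pCoreOf {G' : Type} [Group G'] {f : G →* G'} (hf : Function.Injective f)
    (K : Subgroup G) : (pCoreOf ℓ K).map f = pCoreOf ℓ (K.map f) := by
  have hcomp : (K.map f).subtype.comp (K.equivMapOfInjective f hf : K →* K.map f)
      = f.comp K.subtype := by
    ext
    simp [coe_equivMapOfInjective_apply]
  rw [pCoreOf, pCoreOf, ← map_pCore (K.equivMapOfInjective f hf), map_map, map_map, hcomp]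

theorem normalizer_le_normalizer_pCoreOf (K : Subgroup G) :
    normalizer (K : Set G) ≤ normalizer (pCoreOf ℓ K : Set G) := by
  intro g hg
  rw [mem_normalizer_iff_map_conj_eq] at hg ⊢
  rw [map_pCoreOf (MulAut.conj g).injective, hg]

theorem pCoreOf_eq_of_pCoreOf_le [Finite G] (hℓ : ℓ.Prime) {K N : Subgroup G} (hKN : K ≤ N)
    (hN : N ≤ normalizer (K : Set G)) (hcore : pCoreOf ℓ N ≤ K) :
    pCoreOf ℓ K = pCoreOf ℓ N := by
  apply le_antisymm
  · exact le_pCoreOf ((pCoreOf_le K).trans hKN) (hN.trans (normalizer_le_normalizer_pCoreOf K))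
      (isPGroup_pCoreOf hℓ K)
  · exact le_pCoreOf hcore (hKN.trans (le_normalizer.trans (normalizer_le_normalizer_pCoreOf N)))
      (isPGroup_pCoreOf hℓ N)

theorem _root_.IsPGroup.le_of_index_eq_two {P H : Subgroup G} (hodd : Odd ℓ) (hP : IsPGroup ℓ P)
    (hH : H.index = 2) : P ≤ H := by
  intro x hx
  obtain ⟨n, hn⟩ := hP ⟨x, hx⟩
  obtain ⟨k, hk⟩ := hodd.pow (n := n)
  have hx1 : x ^ ℓ ^ n = 1 := by simpa using congrArg Subtype.val hn
  have hx2 : (x ^ 2) ^ (k + 1) = x := by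
    rw [← pow_mul, show 2 * (k + 1) = ℓ ^ n + 1 by omega, pow_succ, hx1, one_mul]
  rw [← hx2]
  exact pow_mem (sq_mem_of_index_two hH x) _

theorem pCoreOf_inf_of_index_eq_two [Finite G] (hℓ : ℓ.Prime) (hodd : Odd ℓ) {H : Subgroup G}
    (hH : H.index = 2) (N : Subgroup G) : pCoreOf ℓ (H ⊓ N) = pCoreOf ℓ N := by
  have := normal_of_index_eq_two hH
  refine pCoreOf_eq_of_pCoreOf_le hℓ inf_le_right
    (normal_subgroupOf_iff_le_normalizer_inf.mp inferInstance) ?_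
  exact le_inf ((isPGroup_pCoreOf hℓ N).le_of_index_eq_two hodd hH) (pCoreOf_le N)

end Subgroup

open Subgroup

section IndexTwo

variable {G : Type} [Group G] [Finite G] {H : Subgroup G} {ℓ : ℕ}

theorem map_subtype_pCoreOf_normalizer_subgroupOf (hH : H.index = 2) (hℓ : ℓ.Prime)
    (hodd : Odd ℓ) {R : Subgroup G} (hRH : R ≤ H) :
    (pCoreOf ℓ (normalizer (R.subgroupOf H : Set H))).map H.subtype =
      pCoreOf ℓ (normalizer (R : Set G)) := by
  rw [map_pCoreOf H.subtype_injective, ← subgroupOf_normalizer_eq hRH, subgroupOf_map_subtype,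
    inf_comm, pCoreOf_inf_of_index_eq_two hℓ hodd hH]

theorem isRadicalSubgroup_subgroupOf_iff (hH : H.index = 2) (hℓ : ℓ.Prime) (hodd : Odd ℓ)
    {R : Subgroup G} (hRH : R ≤ H) :
    IsRadicalSubgroup ℓ (R.subgroupOf H) ↔ IsRadicalSubgroup ℓ R := by
  rw [IsRadicalSubgroup, IsRadicalSubgroup, ← (map_injective H.subtype_injective).eq_iff,
    map_subgroupOf_eq_of_le hRH, map_subtype_pCoreOf_normalizer_subgroupOf hH hℓ hodd hRH]

theorem IsRadicalSubgroup.le_of_index_eq_two (hH : H.index = 2) (hℓ : ℓ.Prime) (hodd : Odd ℓ)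
    {R : Subgroup G} (hR : IsRadicalSubgroup ℓ R) : R ≤ H :=
  (hR ▸ isPGroup_pCoreOf hℓ _ : IsPGroup ℓ R).le_of_index_eq_two hodd hH

end IndexTwo

theorem statement2_general (G : Type) [Group G] [Finite G] (H : Subgroup G)
    (hH : H.index = 2) (ℓ : ℕ) (hℓ : ℓ.Prime) (hℓodd : Odd ℓ) (R : Subgroup G) :
    IsRadicalSubgroup ℓ R ↔ R ≤ H ∧ IsRadicalSubgroup ℓ (R.subgroupOf H) := by
  constructor
  · intro hR
    have hRH := hR.le_of_index_eq_two hH hℓ hℓodd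
    exact ⟨hRH, (isRadicalSubgroup_subgroupOf_iff hH hℓ hℓodd hRH).mpr hR⟩
  · rintro ⟨hRH, hR⟩
    exact (isRadicalSubgroup_subgroupOf_iff hH hℓ hℓodd hRH).mp hR

theorem statement2 (G : Type) [Group G] [Finite G] (H : Subgroup G) [H.Normal]
    (hH : H.index = 2) (ℓ : ℕ) (hℓ : ℓ.Prime) (hℓodd : Odd ℓ) (R : Subgroup G) :
    IsRadicalSubgroup ℓ R ↔ R ≤ H ∧ IsRadicalSubgroup ℓ (R.subgroupOf H) :=
  statement2_general G H hH ℓ hℓ hℓodd R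
end

section
/- Let G be a finite group, ℓ a prime, and Z a central subgroup of G whose order is not divisible by ℓ; write Ḡ = G/Z with canonical projection π. If (R, φ) is an ℓ-weight of G such that Z is contained in the kernel of φ, and R̄ = π(R), then (R̄, φ̄) is an ℓ-weight of Ḡ, where φ̄ is the unique character of N_{Ḡ}(R̄) = π(N_G(R)) satisfying φ̄(π(g)) = φ(g) for all g ∈ N_G(R). -/
open scoped Classical

/-- `χ : G → ℂ` is an irreducible (complex) character of `G`: it is the character of some
simple finite-dimensional complex representation of `G`. -/
def IsIrrChar (G : Type) [Monoid G] (χ : G → ℂ) : Prop :=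
  ∃ V : FDRep ℂ G, CategoryTheory.Simple V ∧ ∀ g : G, χ g = FDRep.character V g

/-- The usual inner product of class functions on a finite group `L`. -/
noncomputable def charInner (L : Type) (α β : L → ℂ) : ℂ :=
  (Nat.card L : ℂ)⁻¹ * ∑ᶠ l : L, α l * (starRingEnd ℂ) (β l)

/-- Restriction of a character of a subgroup `B` of `H` to a smaller subgroup `A ≤ B`. -/
def restrictChar {H : Type} [Group H] {A B : Subgroup H} (h : A ≤ B) (χ : ↥B → ℂ) :
    ↥A → ℂ :=
  fun a => χ ⟨↑a, h a.2⟩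

/-- A character `χ` of `H` lies over a character `θ` of a subgroup `A ≤ H` if `θ` is a
constituent of the restriction of `χ` to `A`. -/
def liesOver {H : Type} [Group H] (A : Subgroup H) (χ : H → ℂ) (θ : ↥A → ℂ) : Prop :=
  charInner ↥A (fun a : ↥A => χ ↑a) θ ≠ 0

/-- `(R, φ)` is an `ℓ`-weight of `G`: `R` is an `ℓ`-subgroup of `G` and `φ` is an irreducible
complex character of `N_G(R)` whose kernel contains `R` and which has `ℓ`-defect zero viewed as
a character of `N_G(R)/R`, i.e. `|N_G(R)/R|/φ(1)` is not divisible by `ℓ`. -/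
def IsWeight (ℓ : ℕ) {G : Type} [Group G] (R : Subgroup G) (φ : ↥(Subgroup.normalizer (R : Set G)) → ℂ) : Prop :=
  IsPGroup ℓ ↥R ∧ IsIrrChar ↥(Subgroup.normalizer (R : Set G)) φ ∧
  (∀ (r : G) (hr : r ∈ R), φ ⟨r, Subgroup.le_normalizer hr⟩ = φ 1) ∧
  ∃ d m : ℕ, ¬ ℓ ∣ m ∧ φ 1 = (d : ℂ) ∧
    Nat.card ↥(Subgroup.normalizer (R : Set G)) = m * d * Nat.card ↥R

/-- The stabilizer (as a set) of a character `φ` of a normal subgroup `L` of `H` under the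
conjugation action of `H` on `Irr(L)`. -/
def charStab {H : Type} [Group H] (L : Subgroup H) (φ : ↥L → ℂ) : Set H :=
  {h : H | ∀ (l : ↥L) (hl : h * ↑l * h⁻¹ ∈ L), φ ⟨h * ↑l * h⁻¹, hl⟩ = φ l}

/-- The character of `M` induced from a character `ψ` of a subgroup `U ≤ M`. -/
noncomputable def inducedChar {M : Type} [Group M] (U : Subgroup M) (ψ : ↥U → ℂ) : M → ℂ :=
  fun g => (Nat.card ↥U : ℂ)⁻¹ *
    ∑ᶠ x : M, if h : x * g * x⁻¹ ∈ U then ψ ⟨x * g * x⁻¹, h⟩ else 0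

/-!
As `Z` is a central `ℓ'`-group and `R` an `ℓ`-group, `R ∩ Z = 1` (so `R̄ ≅ R`) and `R` is exactly
the set of `ℓ`-elements of `R ⊔ Z = π⁻¹(R̄)`. Hence whatever normalizes `R ⊔ Z` normalizes `R`,
and `N_Ḡ(R̄) = π(N_G(R))`. Since `φ` is trivial on `Z`, its representation factors through
`N_G(R) → N_Ḡ(R̄)`; it stays irreducible because the norm of its character is computed fibrewise.
Finally `|N_Ḡ(R̄)| = |N_G(R)| / |Z|`, and as `φ(1)` divides `|N_Ḡ(R̄)|` (Frobenius), the factor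
`|Z|`, prime to `ℓ`, is taken entirely out of the `ℓ'`-part `|N_G(R)| / (φ(1) |R|)`.
-/

open CategoryTheory

lemma MonoidHom.card_eq_card_ker_mul_of_surjective {Γ Δ : Type*} [Group Γ] [Group Δ]
    (f : Γ →* Δ) (hf : Function.Surjective f) : Nat.card Γ = Nat.card f.ker * Nat.card Δ := by
  rw [← f.ker.card_mul_index, Subgroup.index_ker f, f.range_eq_top.2 hf, Subgroup.card_top]

lemma MonoidHom.sum_comp_of_surjective {Γ Δ M : Type*} [Group Γ] [Group Δ] [Fintype Γ]
    [Fintype Δ] [AddCommMonoid M] (f : Γ →* Δ) (hf : Function.Surjective f) (F : Δ → M) :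
    ∑ g, F (f g) = Nat.card f.ker • ∑ y, F y := by
  rw [← Finset.sum_fiberwise' Finset.univ f F, Finset.smul_sum]
  refine Finset.sum_congr rfl fun y _ => ?_
  rw [Finset.sum_const, MonoidHom.card_fiber_eq_of_mem_range f (hf y) ⟨1, map_one f⟩,
    Nat.card_eq_fintype_card, Fintype.card_subtype]
  simp only [MonoidHom.mem_ker]

lemma Subgroup.card_map_of_disjoint_ker {G G' : Type*} [Group G] [Group G'] {f : G →* G'}
    {R : Subgroup G} (h : Disjoint R f.ker) : Nat.card (R.map f) = Nat.card R := by
  rw [(f.subgroupMap R).card_eq_card_ker_mul_of_surjective (f.subgroupMap_surjective R),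
    Subgroup.ker_subgroupMap, subgroupOf_eq_bot.2 h.symm, Subgroup.card_bot, one_mul]

lemma Nat.exists_not_dvd_eq_mul_of_mul_eq {ℓ n z m d r : ℕ} (hrz : r.Coprime z) (hm : ¬ ℓ ∣ m)
    (hd : d ∣ n) (h : n * z = m * d * r) : ∃ m', ¬ ℓ ∣ m' ∧ n = m' * d * r := by
  rcases eq_or_ne d 0 with rfl | hd0
  · exact ⟨m, hm, by simpa using hd⟩
  rcases eq_or_ne r 0 with rfl | hr0
  · exact ⟨m, hm, by simpa [(Nat.coprime_zero_left z).1 hrz] using h⟩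
  obtain ⟨b, rfl⟩ := hd
  have hb : b * z = m * r := Nat.eq_of_mul_eq_mul_left (Nat.pos_of_ne_zero hd0) (by linarith)
  obtain ⟨m', rfl⟩ := hrz.dvd_of_dvd_mul_right ⟨m, by rw [hb, mul_comm]⟩
  have hm' : m' * z = m := Nat.eq_of_mul_eq_mul_left (Nat.pos_of_ne_zero hr0) (by linarith)
  exact ⟨m', fun h => hm (hm' ▸ dvd_mul_of_dvd_left h z), by ring⟩

lemma Nat.dvd_of_natCast_eq_mul_isIntegral {a b : ℕ} {s : ℂ} (hs : IsIntegral ℤ s)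
    (hb : b ≠ 0) (h : (a : ℂ) = b * s) : b ∣ a := by
  have hq : algebraMap ℚ ℂ ((a : ℚ) / b) = s := by
    rw [map_div₀, map_natCast, map_natCast, h, mul_div_cancel_left₀ _ (by exact_mod_cast hb)]
  obtain ⟨y, hy⟩ := IsIntegrallyClosed.isIntegral_iff.1 <|
    (isIntegral_algebraMap_iff (algebraMap ℚ ℂ).injective).1 (hq ▸ hs)
  have hy' : (a : ℚ) = y * b := by
    rw [algebraMap_int_eq, eq_intCast, eq_div_iff (by exact_mod_cast hb)] at hy
    exact_mod_cast hy.symm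
  exact Int.natCast_dvd_natCast.1 ⟨y, by rw [mul_comm]; exact_mod_cast hy'⟩

lemma Module.End.isIntegral_trace_of_pow_eq_one {V : Type*} [AddCommGroup V] [Module ℂ V]
    [FiniteDimensional ℂ V] (f : Module.End ℂ V) {N : ℕ} (hN : 0 < N) (hf : f ^ N = 1) :
    IsIntegral ℤ (LinearMap.trace ℂ V f) := by
  rw [Module.End.trace_eq_sum_roots_charpoly_of_splits (IsAlgClosed.splits _)]
  refine IsIntegral.multiset_sum fun μ hμ => IsIntegral.of_pow hN ?_
  have hμ : f.HasEigenvalue μ :=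
    (f.hasEigenvalue_iff_isRoot_charpoly μ).2 (Polynomial.isRoot_of_mem_roots hμ)
  obtain ⟨v, hv⟩ := (hμ.pow N).exists_hasEigenvector
  have hμN : μ ^ N = 1 := by
    have h : (μ ^ N - 1) • v = 0 := by
      rw [sub_smul, one_smul, ← hv.apply_eq_smul, hf, Module.End.one_apply, sub_self]
    exact sub_eq_zero.1 ((smul_eq_zero.1 h).resolve_right hv.2)
  rw [hμN]
  exact isIntegral_one

namespace FDRep

section Frobenius

variable {H : Type} [Group H] (W : FDRep ℂ H)

lemma isIntegral_character [Finite H] (h : H) : IsIntegral ℤ (W.character h) :=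
  Module.End.isIntegral_trace_of_pow_eq_one (W.ρ h) Nat.card_pos
    (by rw [← map_pow, pow_card_eq_one', map_one])

lemma nontrivial_of_simple [Simple W] : Nontrivial W := by
  by_contra h
  rw [not_nontrivial_iff_subsingleton] at h
  exact id_nonzero W (Action.Hom.ext (by ext v; exact Subsingleton.elim _ _))

lemma exists_eq_smul_id_of_commute [Simple W] (f : Module.End ℂ W)
    (hf : ∀ h : H, W.ρ h * f = f * W.ρ h) : ∃ c : ℂ, f = c • LinearMap.id := by
  let F : W ⟶ W :=
    ⟨FGModuleCat.ofHom f, fun h => by ext v; exact (LinearMap.congr_fun (hf h) v).symm⟩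
  obtain ⟨c, hc⟩ := endomorphism_simple_eq_smul_id ℂ F
  exact ⟨c, LinearMap.ext fun v =>
    (ConcreteCategory.congr_hom (congrArg Action.Hom.hom hc) v).symm⟩

lemma isIntegral_of_mem_span_ρ [Finite H] (T : Module.End ℂ W)
    (hT : T ∈ Submodule.span ℤ (Set.range fun h : H => (W.ρ h : Module.End ℂ W))) :
    IsIntegral ℤ T := by
  set M := Submodule.span ℤ (Set.range fun h : H => (W.ρ h : Module.End ℂ W))
  have hone : (1 : Module.End ℂ W) ∈ M := Submodule.subset_span ⟨1, map_one W.ρ⟩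
  have hmul : M * M ≤ M := by
    rw [Submodule.span_mul_span, Submodule.span_le]
    rintro - ⟨-, ⟨g, rfl⟩, -, ⟨g', rfl⟩, rfl⟩
    exact Submodule.subset_span ⟨g * g', map_mul W.ρ g g'⟩
  exact IsIntegral.of_mem_of_fg
    (M.toSubalgebra hone fun _ _ hx hy => hmul (Submodule.mul_mem_mul hx hy))
    (Submodule.fg_span (Set.finite_range _)) T hT

noncomputable def classSum [Fintype H] (c : ConjClasses H) : Module.End ℂ W :=
  ∑ h with ConjClasses.mk h = c, W.ρ h

lemma commute_classSum [Fintype H] (c : ConjClasses H) (g : H) :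
    W.ρ g * W.classSum c = W.classSum c * W.ρ g := by
  simp only [classSum, Finset.mul_sum, Finset.sum_mul, ← map_mul]
  refine Finset.sum_nbij' (g * · * g⁻¹) (g⁻¹ * · * g) ?_ ?_ ?_ ?_ ?_ <;> intro h hh <;>
    simp only [Finset.mem_filter, Finset.mem_univ, true_and] at hh ⊢
  · exact hh ▸ ConjClasses.mk_eq_mk_iff_isConj.2 (isConj_iff.2 ⟨g⁻¹, by group⟩)
  · exact hh ▸ ConjClasses.mk_eq_mk_iff_isConj.2 (isConj_iff.2 ⟨g, by group⟩)
  all_goals group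

lemma exists_isIntegral_sum_character_eq_mul [Fintype H] [Simple W] (c : ConjClasses H) :
    ∃ ω : ℂ, IsIntegral ℤ ω ∧
      ∑ h with ConjClasses.mk h = c, W.character h = ω * Module.finrank ℂ W := by
  obtain ⟨ω, hω⟩ := W.exists_eq_smul_id_of_commute _ fun g => W.commute_classSum c g
  have := W.nontrivial_of_simple
  refine ⟨ω, ?_, ?_⟩
  · have hint := W.isIntegral_of_mem_span_ρ (W.classSum c) <|
      Submodule.sum_mem _ fun h _ => Submodule.subset_span ⟨h, rfl⟩
    rw [hω, ← Module.End.one_eq_id, ← Algebra.algebraMap_eq_smul_one] at hint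
    exact (isIntegral_algebraMap_iff (algebraMap ℂ (Module.End ℂ W)).injective).1 hint
  · have htr := congrArg (LinearMap.trace ℂ W) hω
    rwa [classSum, map_sum, map_smul, LinearMap.trace_id, smul_eq_mul] at htr

lemma character_inv_eq_of_mk_eq {c : ConjClasses H} {h : H} (hc : ConjClasses.mk h = c) :
    W.character h⁻¹ = W.character c.out⁻¹ := by
  subst hc
  obtain ⟨u, hu⟩ := isConj_iff.1
    (ConjClasses.mk_eq_mk_iff_isConj.1 (Quotient.out_eq (ConjClasses.mk h)))
  calc W.character h⁻¹ = W.character (u * (ConjClasses.mk h).out⁻¹ * u⁻¹) := by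
        rw [← conj_inv, hu]
    _ = _ := char_conj _ _ _

theorem finrank_dvd_card [Fintype H] [Simple W] : Module.finrank ℂ W ∣ Fintype.card H := by
  choose ω hint hω using W.exists_isIntegral_sum_character_eq_mul
  have hcard : (Fintype.card H : ℂ) =
      Module.finrank ℂ W * ∑ c : ConjClasses H, ω c * W.character c.out⁻¹ := by
    calc (Fintype.card H : ℂ) = ∑ h, W.character h * W.character h⁻¹ := by
          rw [(simple_iff_char_is_norm_one W).1 inferInstance, Nat.card_eq_fintype_card]
      _ = ∑ c : ConjClasses H,
            ∑ h with ConjClasses.mk h = c, W.character h * W.character h⁻¹ :=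
          (Finset.sum_fiberwise _ _ _).symm
      _ = ∑ c : ConjClasses H,
            (∑ h with ConjClasses.mk h = c, W.character h) * W.character c.out⁻¹ := by
          simp only [Finset.sum_mul]
          exact Finset.sum_congr rfl fun c _ => Finset.sum_congr rfl fun h hh => by
            rw [W.character_inv_eq_of_mk_eq (Finset.mem_filter.1 hh).2]
      _ = _ := by
          rw [Finset.mul_sum]
          exact Finset.sum_congr rfl fun c _ => by rw [hω]; ring
  exact Nat.dvd_of_natCast_eq_mul_isIntegral
    (IsIntegral.sum _ fun c _ => (hint c).mul (W.isIntegral_character _))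
    (have := W.nontrivial_of_simple; Module.finrank_pos.ne') hcard

end Frobenius

lemma simple_of_character_comp {Γ Δ : Type} [Group Γ] [Group Δ] [Fintype Γ] [Fintype Δ]
    (f : Γ →* Δ) (hf : Function.Surjective f) (V : FDRep ℂ Γ) [Simple V] (W : FDRep ℂ Δ)
    (hVW : ∀ g, W.character (f g) = V.character g) : Simple W := by
  have hV := (simple_iff_char_is_norm_one V).1 ‹_›
  simp only [← hVW, map_inv] at hV
  rw [f.sum_comp_of_surjective hf (fun y => W.character y * W.character y⁻¹),
    f.card_eq_card_ker_mul_of_surjective hf, nsmul_eq_mul, Nat.cast_mul] at hV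
  rw [simple_iff_char_is_norm_one]
  exact mul_left_cancel₀ (by exact_mod_cast Nat.card_pos.ne') hV

lemma ρ_eq_one_of_character_eq_finrank {Γ : Type} [Group Γ] [Fintype Γ] (U : FDRep ℂ Γ)
    (h : ∀ γ, U.character γ = Module.finrank ℂ U) (γ : Γ) : U.ρ γ = 1 := by
  have : Invertible (Nat.card Γ : ℂ) := invertibleOfNonzero (by exact_mod_cast Nat.card_pos.ne')
  have hinv := U.average_char_eq_finrank_invariants
  rw [Finset.sum_congr rfl fun γ _ => h γ, Finset.sum_const, Finset.card_univ, nsmul_eq_mul,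
    ← Nat.card_eq_fintype_card, inv_mul_cancel_left₀ (by exact_mod_cast Nat.card_pos.ne'),
    Nat.cast_inj] at hinv
  have htop := Submodule.eq_top_of_finrank_eq hinv.symm
  exact LinearMap.ext fun v => (htop ▸ Submodule.mem_top : v ∈ Representation.invariants U.ρ) γ

lemma le_ker_ρ_of_character_eq {Γ : Type} [Group Γ] [Finite Γ] (V : FDRep ℂ Γ)
    (K : Subgroup Γ) (h : ∀ k ∈ K, V.character k = V.character 1) : K ≤ V.ρ.ker := by
  have := Fintype.ofFinite K
  intro k hk
  refine (FDRep.of (V.ρ.comp K.subtype)).ρ_eq_one_of_character_eq_finrank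
    (fun x => ?_) ⟨k, hk⟩
  change V.character x = (Module.finrank ℂ V : ℂ)
  exact (h x x.2).trans V.char_one

end FDRep

lemma IsIrrChar.of_comp {Γ Δ : Type} [Group Γ] [Group Δ] [Finite Γ] (f : Γ →* Δ)
    (hf : Function.Surjective f) {χ : Γ → ℂ} (hχ : IsIrrChar Γ χ)
    (hker : ∀ k ∈ f.ker, χ k = χ 1) {ψ : Δ → ℂ} (hψ : ∀ g, ψ (f g) = χ g) :
    IsIrrChar Δ ψ := by
  obtain ⟨V, hV, hVχ⟩ := hχ
  have hle : f.ker ≤ V.ρ.ker :=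
    V.le_ker_ρ_of_character_eq _ fun k hk => by rw [← hVχ, ← hVχ, hker k hk]
  let e := QuotientGroup.quotientKerEquivOfSurjective f hf
  let W : FDRep ℂ Δ := FDRep.of ((QuotientGroup.lift f.ker V.ρ hle).comp e.symm.toMonoidHom)
  have hW : ∀ g, W.character (f g) = V.character g := fun g => by
    have he : e.symm (f g) = g := (MulEquiv.symm_apply_eq e).2 rfl
    simp only [FDRep.character, W, FDRep.of_ρ', MonoidHom.comp_apply,
      MulEquiv.coe_toMonoidHom, he, QuotientGroup.lift_mk]
  have := Fintype.ofFinite Γ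
  have := Fintype.ofSurjective f hf
  refine ⟨W, FDRep.simple_of_character_comp f hf V W hW, fun y => ?_⟩
  obtain ⟨g, rfl⟩ := hf y
  rw [hψ, hVχ, hW]

lemma IsIrrChar.dvd_card {H : Type} [Group H] [Finite H] {χ : H → ℂ} (hχ : IsIrrChar H χ)
    {d : ℕ} (hd : χ 1 = d) : d ∣ Nat.card H := by
  obtain ⟨V, hV, hVχ⟩ := hχ
  have := Fintype.ofFinite H
  rw [hVχ, FDRep.char_one, Nat.cast_inj] at hd
  rw [← hd, Nat.card_eq_fintype_card]
  exact V.finrank_dvd_card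

namespace Subgroup

variable {G : Type} [Group G] {ℓ : ℕ} {Z R : Subgroup G}

lemma eq_one_of_pow_prime_pow_eq_one (hℓ : ℓ.Prime) (hZℓ : ¬ ℓ ∣ Nat.card Z) {z : G}
    (hz : z ∈ Z) {n : ℕ} (hzn : z ^ ℓ ^ n = 1) : z = 1 :=
  orderOf_eq_one_iff.1 <| Nat.eq_one_of_dvd_coprimes
    (Nat.Coprime.pow_left n ((hℓ.coprime_iff_not_dvd).2 hZℓ))
    (orderOf_dvd_of_pow_eq_one hzn) (Z.orderOf_dvd_natCard hz)

lemma disjoint_of_isPGroup (hℓ : ℓ.Prime) (hZℓ : ¬ ℓ ∣ Nat.card Z) (hR : IsPGroup ℓ R) :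
    Disjoint R Z :=
  disjoint_def.2 fun {x} hxR hxZ => by
    obtain ⟨k, hk⟩ := hR ⟨x, hxR⟩
    exact eq_one_of_pow_prime_pow_eq_one hℓ hZℓ hxZ (by simpa using congrArg Subtype.val hk)

variable [Z.Normal]

lemma mem_of_mem_sup_of_pow_eq_one (hℓ : ℓ.Prime) (hZc : Z ≤ center G)
    (hZℓ : ¬ ℓ ∣ Nat.card Z) (hR : IsPGroup ℓ R) {c : G} (hc : c ∈ R ⊔ Z) {n : ℕ}
    (hcn : c ^ ℓ ^ n = 1) : c ∈ R := by
  obtain ⟨r, hr, z, hz, rfl⟩ := mem_sup_of_normal_right.1 hc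
  obtain ⟨k, hk⟩ := hR ⟨r, hr⟩
  have hrk : r ^ ℓ ^ k = 1 := by simpa using congrArg Subtype.val hk
  have hcomm : Commute r z := mem_center_iff.1 (hZc hz) r
  have hzk : (r * z) ^ (ℓ ^ k * ℓ ^ n) = 1 := by rw [mul_comm, pow_mul, hcn, one_pow]
  rw [hcomm.mul_pow, pow_mul r, hrk, one_pow, one_mul, ← pow_add] at hzk
  rw [eq_one_of_pow_prime_pow_eq_one hℓ hZℓ hz hzk, mul_one]
  exact hr

lemma normalizer_sup_le_normalizer (hℓ : ℓ.Prime) (hZc : Z ≤ center G)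
    (hZℓ : ¬ ℓ ∣ Nat.card Z) (hR : IsPGroup ℓ R) :
    normalizer (R ⊔ Z : Subgroup G) ≤ normalizer (R : Set G) := by
  rw [le_normalizer_iff]
  intro x hx r hr
  obtain ⟨k, hk⟩ := hR ⟨r, hr⟩
  refine mem_of_mem_sup_of_pow_eq_one hℓ hZc hZℓ hR
    ((mem_normalizer_iff.1 hx r).1 (mem_sup_left hr)) (n := k) ?_
  rw [conj_pow, show r ^ ℓ ^ k = 1 by simpa using congrArg Subtype.val hk, mul_one,
    mul_inv_cancel]

lemma normalizer_map_mk_eq (hℓ : ℓ.Prime) (hZc : Z ≤ center G)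
    (hZℓ : ¬ ℓ ∣ Nat.card Z) (hR : IsPGroup ℓ R) :
    normalizer ((R.map (QuotientGroup.mk' Z) : Subgroup (G ⧸ Z)) : Set (G ⧸ Z)) =
      (normalizer (R : Set G)).map (QuotientGroup.mk' Z) := by
  have hπ := QuotientGroup.mk'_surjective Z
  refine le_antisymm ?_ (le_normalizer_map _)
  calc normalizer ((R.map (QuotientGroup.mk' Z) : Subgroup (G ⧸ Z)) : Set (G ⧸ Z))
      = (normalizer ((R.map (QuotientGroup.mk' Z)).comap (QuotientGroup.mk' Z) : Set G)).map
          (QuotientGroup.mk' Z) := by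
        rw [← comap_normalizer_eq_of_surjective _ hπ, map_comap_eq_self_of_surjective hπ]
    _ = (normalizer (R ⊔ Z : Subgroup G)).map (QuotientGroup.mk' Z) := by
        rw [comap_map_eq, QuotientGroup.ker_mk']
    _ ≤ _ := map_mono (normalizer_sup_le_normalizer hℓ hZc hZℓ hR)

lemma exists_surjective_normalizer_map_mk (hℓ : ℓ.Prime) (hZc : Z ≤ center G)
    (hZℓ : ¬ ℓ ∣ Nat.card Z) (hR : IsPGroup ℓ R) :
    ∃ f : normalizer (R : Set G) →*
        normalizer ((R.map (QuotientGroup.mk' Z) : Subgroup (G ⧸ Z)) : Set (G ⧸ Z)),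
      Function.Surjective f ∧ (∀ n, (f n : G ⧸ Z) = QuotientGroup.mk' Z n) ∧
        f.ker = Z.subgroupOf (normalizer (R : Set G)) := by
  have hNmap := normalizer_map_mk_eq hℓ hZc hZℓ hR
  refine ⟨((QuotientGroup.mk' Z).comp (normalizer (R : Set G)).subtype).codRestrict _
    fun n => hNmap ▸ mem_map_of_mem _ n.2, ?_, fun _ => rfl, ?_⟩
  · rintro ⟨y, hy⟩
    obtain ⟨x, hx, rfl⟩ := mem_map.1 (hNmap ▸ hy)
    exact ⟨⟨x, hx⟩, rfl⟩
  · ext n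
    rw [MonoidHom.mem_ker, mem_subgroupOf, ← QuotientGroup.eq_one_iff, ← Subtype.val_inj]
    rfl

end Subgroup

theorem statement5 (G : Type) [Group G] [Finite G] (ℓ : ℕ) (hℓ : ℓ.Prime)
    (Z : Subgroup G) [Z.Normal] (hZc : Z ≤ Subgroup.center G)
    (hZℓ : ¬ ℓ ∣ Nat.card Z)
    (R : Subgroup G) (φ : ↥(Subgroup.normalizer (R : Set G)) → ℂ) (hw : IsWeight ℓ R φ)
    (hker : ∀ (z : G) (hz : z ∈ Z) (hn : z ∈ (Subgroup.normalizer (R : Set G))), φ ⟨z, hn⟩ = φ 1)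
    (Rbar : Subgroup (G ⧸ Z)) (hRbar : Rbar = Subgroup.map (QuotientGroup.mk' Z) R)
    (φbar : ↥(Subgroup.normalizer (Rbar : Set (G ⧸ Z))) → ℂ)
    (hφbar : ∀ (n : ↥(Subgroup.normalizer (R : Set G))) (h : QuotientGroup.mk' Z ↑n ∈ (Subgroup.normalizer (Rbar : Set (G ⧸ Z)))),
      φbar ⟨QuotientGroup.mk' Z ↑n, h⟩ = φ n) :
    IsWeight ℓ Rbar φbar := by
  subst hRbar
  obtain ⟨hR, hirr, hRker, d, m, hm, hd, hcard⟩ := hw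
  obtain ⟨f, hf, hfπ, hfker⟩ := Subgroup.exists_surjective_normalizer_map_mk hℓ hZc hZℓ hR
  have hφf : ∀ n, φbar (f n) = φ n := fun n => by
    rw [← hφbar n (hfπ n ▸ (f n).2)]
    exact congrArg φbar (Subtype.ext (hfπ n))
  have hφbar1 : φbar 1 = φ 1 := by rw [← hφf 1, map_one]
  have hirrbar : IsIrrChar _ φbar := hirr.of_comp f hf
    (fun n hn => hker n (Subgroup.mem_subgroupOf.1 (hfker ▸ hn)) n.2) hφf
  refine ⟨hR.map _, hirrbar, ?_, ?_⟩
  · rintro - ⟨r, hr, rfl⟩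
    rw [hφbar1, ← hRker r hr, ← hφf]
    exact congrArg φbar (Subtype.ext (hfπ ⟨r, Subgroup.le_normalizer hr⟩).symm)
  have hcardN : Nat.card (Subgroup.normalizer (R : Set G)) = Nat.card Z *
      Nat.card (Subgroup.normalizer (R.map (QuotientGroup.mk' Z) : Set (G ⧸ Z))) := by
    rw [f.card_eq_card_ker_mul_of_surjective hf, hfker, Nat.card_congr
      (Subgroup.subgroupOfEquivOfLe (hZc.trans (Subgroup.center_le_normalizer _))).toEquiv]
  have := Fact.mk hℓ
  obtain ⟨k, hk⟩ := IsPGroup.iff_card.1 hR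
  obtain ⟨m', hm', hm'card⟩ := Nat.exists_not_dvd_eq_mul_of_mul_eq
    (hk ▸ Nat.Coprime.pow_left k (hℓ.coprime_iff_not_dvd.2 hZℓ)) hm
    (hirrbar.dvd_card (hφbar1.trans hd)) (by rw [mul_comm, ← hcardN, hcard])
  refine ⟨d, m', hm', hφbar1.trans hd, ?_⟩
  rwa [Subgroup.card_map_of_disjoint_ker
    ((QuotientGroup.ker_mk' Z).symm ▸ Subgroup.disjoint_of_isPGroup hℓ hZℓ hR)]
end
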